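/- arXiv:1703.06606 — 4 statements merged into one kernel-verified Lean document; each statement's English description precedes it below -/
import Mathlib

section
/- Mass conservation for the fully discrete primitive scheme (Theorem 6.1). Let δt > 0, let cⁿ, cⁿ⁺¹, μ̄ⁿ⁺¹, p̄ⁿ⁺¹ be cell-centered grid functions (with ghost values), let (uⁿ⁺¹, vⁿ⁺¹) be an edge-centered velocity satisfying uⁿ⁺¹_{1/2,j} = uⁿ⁺¹_{m₁+1/2,j} = 0 for 1 ≤ j ≤ m₂ and vⁿ⁺¹_{i,1/2} = vⁿ⁺¹_{i,m₂+1/2} = 0 for 1 ≤ i ≤ m₁, and set ρᵏ_{i,j} := ρ(cᵏ_{i,j}) for k = n, n+1 (assuming (ρ₂−ρ₁)cᵏ_{i,j}+ρ₁ ≠ 0 at all grid points used). Suppose that for all 1 ≤ i ≤ m₁, 1 ≤ j ≤ m₂: (continuity) d_x uⁿ⁺¹_{i,j} + d_y vⁿ⁺¹_{i,j} = (α/Pe)[d_x(A_x m(cⁿ)·D_x μ̄ⁿ⁺¹) + d_y(A_y m(cⁿ)·D_y μ̄ⁿ⁺¹)]_{i,j} + (α²/Pe)[d_x(A_x m(cⁿ)·D_x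 p̄ⁿ⁺¹) + d_y(A_y m(cⁿ)·D_y p̄ⁿ⁺¹)]_{i,j}; (phase) ρⁿ⁺¹_{i,j}(cⁿ⁺¹_{i,j}−cⁿ_{i,j})/δt + ½[ρⁿ_{i+1,j} D_x cⁿ_{i+1/2,j} uⁿ⁺¹_{i+1/2,j} + ρⁿ_{i−1,j} D_x cⁿ_{i−1/2,j} uⁿ⁺¹_{i−1/2,j}] + ½[ρⁿ_{i,j+1} D_y cⁿ_{i,j+1/2} vⁿ⁺¹_{i,j+1/2} + ρⁿ_{i,j−1} D_y cⁿ_{i,j−1/2} vⁿ⁺¹_{i,j−1/2}] = (1/Pe)[d_x(A_x m(cⁿ)·D_x μ̄ⁿ⁺¹) + d_y(A_y m(cⁿ)·D_y μ̄ⁿ⁺¹)]_{i,j} + (α/Pe)[d_x(A_x m(cⁿ)·D_x p̄ⁿ⁺¹) + d_y(A_y m(cⁿ)·D_y p̄ⁿ⁺¹)]_{i,j}. Then (ρⁿ⁺¹, 1)₂ = (ρⁿ, 1)₂, i.e. the total discrete mass of the binary fluid is exactly conserved. -/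
open Finset

/-! Staggered-grid notation.  A grid function is a map `ℤ → ℤ → ℝ`.
For a cell-centered function `φ`, `φ i j` is the value `φ_{i,j}`.
For an east-west edge-centered function `u`, `u i j` is the value `u_{i+1/2,j}`.
For a north-south edge-centered function `v`, `v i j` is the value `v_{i,j+1/2}`.
For a vertex-centered function `f`, `f i j` is the value `f_{i+1/2,j+1/2}`. -/
abbrev GridFn := ℤ → ℤ → ℝ

/-- pointwise product of grid functions -/
noncomputable def gmul (f g : GridFn) : GridFn := fun i j => f i j * g i j

/-- the constant grid function `1` -/
noncomputable def oneG : GridFn := fun _ _ => (1 : ℝ)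

/-- edge-to-center average `a_x u_{i,j} = (u_{i+1/2,j}+u_{i-1/2,j})/2` -/
noncomputable def aX (u : GridFn) : GridFn := fun i j => (u i j + u (i - 1) j) / 2
/-- edge-to-center difference `d_x u_{i,j} = (u_{i+1/2,j}-u_{i-1/2,j})/h` -/
noncomputable def dX (h : ℝ) (u : GridFn) : GridFn := fun i j => (u i j - u (i - 1) j) / h
/-- edge-to-center average `a_y v_{i,j} = (v_{i,j+1/2}+v_{i,j-1/2})/2` -/
noncomputable def aY (v : GridFn) : GridFn := fun i j => (v i j + v i (j - 1)) / 2
/-- edge-to-center difference `d_y v_{i,j} = (v_{i,j+1/2}-v_{i,j-1/2})/h` -/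
noncomputable def dY (h : ℝ) (v : GridFn) : GridFn := fun i j => (v i j - v i (j - 1)) / h

/-- center-to-edge average `A_x φ_{i+1/2,j} = (φ_{i+1,j}+φ_{i,j})/2` -/
noncomputable def AX (φ : GridFn) : GridFn := fun i j => (φ (i + 1) j + φ i j) / 2
/-- center-to-edge difference `D_x φ_{i+1/2,j} = (φ_{i+1,j}-φ_{i,j})/h` -/
noncomputable def DX (h : ℝ) (φ : GridFn) : GridFn := fun i j => (φ (i + 1) j - φ i j) / h
/-- center-to-edge average `A_y φ_{i,j+1/2} = (φ_{i,j+1}+φ_{i,j})/2` -/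
noncomputable def AY (φ : GridFn) : GridFn := fun i j => (φ i (j + 1) + φ i j) / 2
/-- center-to-edge difference `D_y φ_{i,j+1/2} = (φ_{i,j+1}-φ_{i,j})/h` -/
noncomputable def DY (h : ℝ) (φ : GridFn) : GridFn := fun i j => (φ i (j + 1) - φ i j) / h

/-- center-to-vertex average `𝒜φ_{i+1/2,j+1/2}` -/
noncomputable def cavV (φ : GridFn) : GridFn :=
  fun i j => (φ i j + φ (i + 1) j + φ i (j + 1) + φ (i + 1) (j + 1)) / 4
/-- vertex-to-center average (the four vertices surrounding cell `(i,j)`) -/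
noncomputable def vavC (f : GridFn) : GridFn :=
  fun i j => (f (i - 1) (j - 1) + f i (j - 1) + f (i - 1) j + f i j) / 4

/-- edge-to-vertex average `𝒜_x v_{i+1/2,j+1/2} = (v_{i+1,j+1/2}+v_{i,j+1/2})/2` -/
noncomputable def eAX (v : GridFn) : GridFn := fun i j => (v (i + 1) j + v i j) / 2
/-- edge-to-vertex difference `𝒟_x v_{i+1/2,j+1/2} = (v_{i+1,j+1/2}-v_{i,j+1/2})/h` -/
noncomputable def eDX (h : ℝ) (v : GridFn) : GridFn := fun i j => (v (i + 1) j - v i j) / h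
/-- edge-to-vertex average `𝒜_y u_{i+1/2,j+1/2} = (u_{i+1/2,j+1}+u_{i+1/2,j})/2` -/
noncomputable def eAY (u : GridFn) : GridFn := fun i j => (u i (j + 1) + u i j) / 2
/-- edge-to-vertex difference `𝒟_y u_{i+1/2,j+1/2} = (u_{i+1/2,j+1}-u_{i+1/2,j})/h` -/
noncomputable def eDY (h : ℝ) (u : GridFn) : GridFn := fun i j => (u i (j + 1) - u i j) / h

/-- vertex-to-edge average `𝔄_x f_{i,j+1/2} = (f_{i+1/2,j+1/2}+f_{i-1/2,j+1/2})/2` -/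
noncomputable def vAX (f : GridFn) : GridFn := fun i j => (f i j + f (i - 1) j) / 2
/-- vertex-to-edge difference `𝔇_x f_{i,j+1/2} = (f_{i+1/2,j+1/2}-f_{i-1/2,j+1/2})/h` -/
noncomputable def vDX (h : ℝ) (f : GridFn) : GridFn := fun i j => (f i j - f (i - 1) j) / h
/-- vertex-to-edge average `𝔄_y f_{i+1/2,j} = (f_{i+1/2,j+1/2}+f_{i+1/2,j-1/2})/2` -/
noncomputable def vAY (f : GridFn) : GridFn := fun i j => (f i j + f i (j - 1)) / 2
/-- vertex-to-edge difference `𝔇_y f_{i+1/2,j} = (f_{i+1/2,j+1/2}-f_{i+1/2,j-1/2})/h` -/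
noncomputable def vDY (h : ℝ) (f : GridFn) : GridFn := fun i j => (f i j - f i (j - 1)) / h

/-- cell-centered inner product `(φ,ψ)₂ = Σ_{i=1}^{m₁} Σ_{j=1}^{m₂} φ_{i,j}ψ_{i,j}` -/
noncomputable def ip2 (m₁ m₂ : ℤ) (φ ψ : GridFn) : ℝ :=
  ∑ i ∈ Icc 1 m₁, ∑ j ∈ Icc 1 m₂, φ i j * ψ i j

/-- east-west edge inner product `[u,γ]_ew = (a_x(uγ),1)₂` -/
noncomputable def ipEW (m₁ m₂ : ℤ) (u γ : GridFn) : ℝ := ip2 m₁ m₂ (aX (gmul u γ)) oneG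

/-- north-south edge inner product `[v,ω]_ns = (a_y(vω),1)₂` -/
noncomputable def ipNS (m₁ m₂ : ℤ) (v ω : GridFn) : ℝ := ip2 m₁ m₂ (aY (gmul v ω)) oneG

/-!
Since `ρ(a) - ρ(b) = α ρ(a) ρ(b) (b - a)`, the phase equation multiplied by `α ρⁿ δt`, minus the
continuity equation multiplied by `ρⁿ δt`, eliminates the chemical-potential and pressure fluxes
and leaves the conservative update
`ρⁿ⁺¹ - ρⁿ = -δt (d_x (A_x ρⁿ · uⁿ⁺¹) + d_y (A_y ρⁿ · vⁿ⁺¹))`.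
Summed over the cells, both differences telescope to boundary fluxes, which vanish with the
velocity.
-/

theorem sum_Icc_one_sub_pred {M : Type*} [AddCommGroup M] (f : ℤ → M) {n : ℤ} (hn : 0 ≤ n) :
    ∑ i ∈ Icc 1 n, (f i - f (i - 1)) = f n - f 0 := by
  induction n, hn using Int.leInduction with
  | base => simp
  | succ n hn ih =>
    rw [← Finset.insert_Icc_right_eq_Icc_add_one (by omega), sum_insert (by simp), ih,
      add_sub_cancel_right]
    abel

section GridSums

variable {m₁ m₂ : ℤ}

theorem ip2_dX_one_eq_zero (hm₁ : 0 ≤ m₁) (h : ℝ) {F : GridFn}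
    (hF : ∀ j ∈ Icc 1 m₂, F 0 j = 0 ∧ F m₁ j = 0) : ip2 m₁ m₂ (dX h F) oneG = 0 := by
  simp only [ip2, dX, oneG, mul_one]
  rw [sum_comm]
  refine Finset.sum_eq_zero fun j hj => ?_
  rw [← Finset.sum_div, sum_Icc_one_sub_pred (F · j) hm₁, (hF j hj).1, (hF j hj).2, sub_zero,
    zero_div]

theorem ip2_dY_one_eq_zero (hm₂ : 0 ≤ m₂) (h : ℝ) {G : GridFn}
    (hG : ∀ i ∈ Icc 1 m₁, G i 0 = 0 ∧ G i m₂ = 0) : ip2 m₁ m₂ (dY h G) oneG = 0 := by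
  simp only [ip2, dY, oneG, mul_one]
  refine Finset.sum_eq_zero fun i hi => ?_
  rw [← Finset.sum_div, sum_Icc_one_sub_pred (G i) hm₂, (hG i hi).1, (hG i hi).2, sub_zero,
    zero_div]

theorem ip2_one_eq_of_sub_eq_mul_divergence (hm₁ : 0 ≤ m₁) (hm₂ : 0 ≤ m₂) {h k : ℝ}
    {φ ψ F G : GridFn} (hF : ∀ j ∈ Icc 1 m₂, F 0 j = 0 ∧ F m₁ j = 0)
    (hG : ∀ i ∈ Icc 1 m₁, G i 0 = 0 ∧ G i m₂ = 0)
    (hφψ : ∀ i ∈ Icc 1 m₁, ∀ j ∈ Icc 1 m₂, φ i j - ψ i j = k * (dX h F i j + dY h G i j)) :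
    ip2 m₁ m₂ φ oneG = ip2 m₁ m₂ ψ oneG := by
  rw [← sub_eq_zero]
  calc ip2 m₁ m₂ φ oneG - ip2 m₁ m₂ ψ oneG
      = k * ip2 m₁ m₂ (dX h F) oneG + k * ip2 m₁ m₂ (dY h G) oneG := by
        simp only [ip2, oneG, mul_one, mul_sum, ← sum_sub_distrib, ← sum_add_distrib]
        exact sum_congr rfl fun i hi => sum_congr rfl fun j hj => by rw [hφψ i hi j hj, mul_add]
    _ = 0 := by rw [ip2_dX_one_eq_zero hm₁ h hF, ip2_dY_one_eq_zero hm₂ h hG]; ring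

end GridSums

noncomputable def density (ρ₁ ρ₂ c : ℝ) : ℝ := ρ₁ * ρ₂ / ((ρ₂ - ρ₁) * c + ρ₁)

theorem density_sub_density {ρ₁ ρ₂ a b : ℝ} (hρ₁ : ρ₁ ≠ 0) (hρ₂ : ρ₂ ≠ 0)
    (ha : (ρ₂ - ρ₁) * a + ρ₁ ≠ 0) (hb : (ρ₂ - ρ₁) * b + ρ₁ ≠ 0) :
    density ρ₁ ρ₂ a - density ρ₁ ρ₂ b
      = (ρ₂ - ρ₁) / (ρ₁ * ρ₂) * density ρ₁ ρ₂ a * density ρ₁ ρ₂ b * (b - a) := by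
  unfold density
  field_simp
  ring

section StaggeredProductRule

/- Discrete form of `∂(ρu) = ρ ∂u - αρ² u ∂c`, i.e. of the chain rule `ρ' = -αρ²` for the density
`ρ = ρ(c)`, whose difference quotients `hr`, `hl` are exact by `density_sub_density`. -/
variable {α h : ℝ} {ρ c u : GridFn} {i j : ℤ}

theorem dX_gmul_AX
    (hr : ρ i j - ρ (i + 1) j = α * ρ i j * ρ (i + 1) j * (c (i + 1) j - c i j))
    (hl : ρ (i - 1) j - ρ i j = α * ρ (i - 1) j * ρ i j * (c i j - c (i - 1) j)) :
    dX h (gmul (AX ρ) u) i j = ρ i j * dX h u i j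
      - α * ρ i j * (ρ (i + 1) j * DX h c i j * u i j
          + ρ (i - 1) j * DX h c (i - 1) j * u (i - 1) j) / 2 := by
  simp only [dX, DX, gmul, AX, sub_add_cancel]
  linear_combination -(u i j / (2 * h)) * hr - (u (i - 1) j / (2 * h)) * hl

theorem dY_gmul_AY
    (hr : ρ i j - ρ i (j + 1) = α * ρ i j * ρ i (j + 1) * (c i (j + 1) - c i j))
    (hl : ρ i (j - 1) - ρ i j = α * ρ i (j - 1) * ρ i j * (c i j - c i (j - 1))) :
    dY h (gmul (AY ρ) u) i j = ρ i j * dY h u i j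
      - α * ρ i j * (ρ i (j + 1) * DY h c i j * u i j
          + ρ i (j - 1) * DY h c i (j - 1) * u i (j - 1)) / 2 := by
  simp only [dY, DY, gmul, AY, sub_add_cancel]
  linear_combination -(u i j / (2 * h)) * hr - (u i (j - 1) / (2 * h)) * hl

end StaggeredProductRule

theorem density_sub_eq_neg_mul_divergence {ρ₁ ρ₂ h δt Φ : ℝ} {c c' ρ ρ' u v : GridFn} {i j : ℤ}
    (hρ₁ : ρ₁ ≠ 0) (hρ₂ : ρ₂ ≠ 0) (hδt : δt ≠ 0)
    (hρ : ∀ a b, ρ a b = density ρ₁ ρ₂ (c a b)) (hρ' : ∀ a b, ρ' a b = density ρ₁ ρ₂ (c' a b))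
    (hc : ∀ a ∈ Icc (i - 1) (i + 1), ∀ b ∈ Icc (j - 1) (j + 1), (ρ₂ - ρ₁) * c a b + ρ₁ ≠ 0)
    (hc' : (ρ₂ - ρ₁) * c' i j + ρ₁ ≠ 0)
    (hphase : ρ' i j * (c' i j - c i j) / δt
        + (ρ (i + 1) j * DX h c i j * u i j + ρ (i - 1) j * DX h c (i - 1) j * u (i - 1) j) / 2
        + (ρ i (j + 1) * DY h c i j * v i j + ρ i (j - 1) * DY h c i (j - 1) * v i (j - 1)) / 2
        = Φ)
    (hcont : dX h u i j + dY h v i j = (ρ₂ - ρ₁) / (ρ₁ * ρ₂) * Φ) :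
    ρ' i j - ρ i j = -δt * (dX h (gmul (AX ρ) u) i j + dY h (gmul (AY ρ) v) i j) := by
  have hρ_sub : ∀ a ∈ Icc (i - 1) (i + 1), ∀ b ∈ Icc (j - 1) (j + 1),
      ∀ a' ∈ Icc (i - 1) (i + 1), ∀ b' ∈ Icc (j - 1) (j + 1),
      ρ a b - ρ a' b' = (ρ₂ - ρ₁) / (ρ₁ * ρ₂) * ρ a b * ρ a' b' * (c a' b' - c a b) :=
    fun a ha b hb a' ha' b' hb' => by
      simp only [hρ]
      exact density_sub_density hρ₁ hρ₂ (hc a ha b hb) (hc a' ha' b' hb')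
  obtain ⟨hi, hi_succ, hi_pred⟩ :
      i ∈ Icc (i - 1) (i + 1) ∧ i + 1 ∈ Icc (i - 1) (i + 1) ∧ i - 1 ∈ Icc (i - 1) (i + 1) := by
    simp only [mem_Icc]; omega
  obtain ⟨hj, hj_succ, hj_pred⟩ :
      j ∈ Icc (j - 1) (j + 1) ∧ j + 1 ∈ Icc (j - 1) (j + 1) ∧ j - 1 ∈ Icc (j - 1) (j + 1) := by
    simp only [mem_Icc]; omega
  have hρ'_sub : ρ' i j - ρ i j = (ρ₂ - ρ₁) / (ρ₁ * ρ₂) * ρ' i j * ρ i j * (c i j - c' i j) := by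
    rw [hρ, hρ']
    exact density_sub_density hρ₁ hρ₂ hc' (hc i hi j hj)
  rw [dX_gmul_AX (hρ_sub _ hi _ hj _ hi_succ _ hj) (hρ_sub _ hi_pred _ hj _ hi _ hj),
    dY_gmul_AY (hρ_sub _ hi _ hj _ hi _ hj_succ) (hρ_sub _ hi _ hj_pred _ hi _ hj)]
  linear_combination hρ'_sub + (δt * ρ i j) * hcont
    - (δt * ((ρ₂ - ρ₁) / (ρ₁ * ρ₂)) * ρ i j) * hphase
    + ((ρ₂ - ρ₁) / (ρ₁ * ρ₂) * ρ i j * ρ' i j * (c' i j - c i j)) * mul_inv_cancel₀ hδt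

theorem fully_discrete_primitive_mass_conservation_general
    (m₁ m₂ : ℤ) (h δt Pe ε ρ₁ ρ₂ : ℝ)
    (hm₁ : 1 ≤ m₁) (hm₂ : 1 ≤ m₂) (hδt : 0 < δt)
    (hρ₁ : 0 < ρ₁) (hρ₂ : 0 < ρ₂)
    (cn cn1 μb pb u v : GridFn)
    -- nonvanishing of the density denominator at all grid points used
    (hne : ∀ i ∈ Icc 0 (m₁ + 1), ∀ j ∈ Icc 0 (m₂ + 1),
      (ρ₂ - ρ₁) * cn i j + ρ₁ ≠ 0 ∧ (ρ₂ - ρ₁) * cn1 i j + ρ₁ ≠ 0)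
    -- no-slip boundary values of the velocity
    (hubc : ∀ j ∈ Icc 1 m₂, u 0 j = 0 ∧ u m₁ j = 0)
    (hvbc : ∀ i ∈ Icc 1 m₁, v i 0 = 0 ∧ v i m₂ = 0) :
    let α : ℝ := (ρ₂ - ρ₁) / (ρ₁ * ρ₂)
    let ρfun : ℝ → ℝ := fun s => ρ₁ * ρ₂ / ((ρ₂ - ρ₁) * s + ρ₁)
    let mfun : ℝ → ℝ := fun s => Real.sqrt (s ^ 2 * (1 - s) ^ 2 + ε)
    let ρn : GridFn := fun i j => ρfun (cn i j)
    let ρn1 : GridFn := fun i j => ρfun (cn1 i j)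
    let mc : GridFn := fun i j => mfun (cn i j)
    let fluxμ : GridFn := fun i j =>
      dX h (gmul (AX mc) (DX h μb)) i j + dY h (gmul (AY mc) (DY h μb)) i j
    let fluxp : GridFn := fun i j =>
      dX h (gmul (AX mc) (DX h pb)) i j + dY h (gmul (AY mc) (DY h pb)) i j
    -- discrete continuity equation
    (∀ i ∈ Icc 1 m₁, ∀ j ∈ Icc 1 m₂,
      dX h u i j + dY h v i j = α / Pe * fluxμ i j + α ^ 2 / Pe * fluxp i j) →
    -- discrete phase equation
    (∀ i ∈ Icc 1 m₁, ∀ j ∈ Icc 1 m₂,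
      ρn1 i j * (cn1 i j - cn i j) / δt
        + (ρn (i + 1) j * DX h cn i j * u i j
            + ρn (i - 1) j * DX h cn (i - 1) j * u (i - 1) j) / 2
        + (ρn i (j + 1) * DY h cn i j * v i j
            + ρn i (j - 1) * DY h cn i (j - 1) * v i (j - 1)) / 2
        = 1 / Pe * fluxμ i j + α / Pe * fluxp i j) →
    ip2 m₁ m₂ ρn1 oneG = ip2 m₁ m₂ ρn oneG := by
  intro α ρfun mfun ρn ρn1 mc fluxμ fluxp hcont hphase
  refine ip2_one_eq_of_sub_eq_mul_divergence (h := h) (k := -δt) (F := gmul (AX ρn) u)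
    (G := gmul (AY ρn) v) (by omega) (by omega) (fun j hj => ?_) (fun i hi => ?_)
    fun i hi j hj => ?_
  · simp [gmul, hubc j hj]
  · simp [gmul, hvbc i hi]
  · have hbox : Icc (i - 1) (i + 1) ⊆ Icc 0 (m₁ + 1) ∧ Icc (j - 1) (j + 1) ⊆ Icc 0 (m₂ + 1) := by
      rw [mem_Icc] at hi hj
      exact ⟨Icc_subset_Icc (by omega) (by omega), Icc_subset_Icc (by omega) (by omega)⟩
    refine density_sub_eq_neg_mul_divergence hρ₁.ne' hρ₂.ne' hδt.ne'
      (fun _ _ => rfl) (fun _ _ => rfl) (fun a ha b hb => (hne a (hbox.1 ha) b (hbox.2 hb)).1)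
      (hne i (hbox.1 (by simp)) j (hbox.2 (by simp))).2 (hphase i hi j hj) ?_
    rw [hcont i hi j hj]
    ring

/-- Theorem 6.1: total-mass conservation for the fully discrete primitive scheme.
Here `ρ(c) = ρ₁ρ₂/((ρ₂−ρ₁)c+ρ₁)`, `m(c) = √(c²(1−c)²+ε)` and
`α = (ρ₂−ρ₁)/(ρ₁ρ₂)`. -/
theorem fully_discrete_primitive_mass_conservation
    (m₁ m₂ : ℤ) (h δt Pe ε ρ₁ ρ₂ : ℝ)
    (hm₁ : 1 ≤ m₁) (hm₂ : 1 ≤ m₂) (hh : 0 < h) (hδt : 0 < δt)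
    (hPe : 0 < Pe) (hε : 0 < ε) (hρ₁ : 0 < ρ₁) (hρ₂ : 0 < ρ₂)
    (cn cn1 μb pb u v : GridFn)
    -- nonvanishing of the density denominator at all grid points used
    (hne : ∀ i ∈ Icc 0 (m₁ + 1), ∀ j ∈ Icc 0 (m₂ + 1),
      (ρ₂ - ρ₁) * cn i j + ρ₁ ≠ 0 ∧ (ρ₂ - ρ₁) * cn1 i j + ρ₁ ≠ 0)
    -- no-slip boundary values of the velocity
    (hubc : ∀ j ∈ Icc 1 m₂, u 0 j = 0 ∧ u m₁ j = 0)
    (hvbc : ∀ i ∈ Icc 1 m₁, v i 0 = 0 ∧ v i m₂ = 0) :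
    let α : ℝ := (ρ₂ - ρ₁) / (ρ₁ * ρ₂)
    let ρfun : ℝ → ℝ := fun s => ρ₁ * ρ₂ / ((ρ₂ - ρ₁) * s + ρ₁)
    let mfun : ℝ → ℝ := fun s => Real.sqrt (s ^ 2 * (1 - s) ^ 2 + ε)
    let ρn : GridFn := fun i j => ρfun (cn i j)
    let ρn1 : GridFn := fun i j => ρfun (cn1 i j)
    let mc : GridFn := fun i j => mfun (cn i j)
    let fluxμ : GridFn := fun i j =>
      dX h (gmul (AX mc) (DX h μb)) i j + dY h (gmul (AY mc) (DY h μb)) i j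
    let fluxp : GridFn := fun i j =>
      dX h (gmul (AX mc) (DX h pb)) i j + dY h (gmul (AY mc) (DY h pb)) i j
    -- discrete continuity equation
    (∀ i ∈ Icc 1 m₁, ∀ j ∈ Icc 1 m₂,
      dX h u i j + dY h v i j = α / Pe * fluxμ i j + α ^ 2 / Pe * fluxp i j) →
    -- discrete phase equation
    (∀ i ∈ Icc 1 m₁, ∀ j ∈ Icc 1 m₂,
      ρn1 i j * (cn1 i j - cn i j) / δt
        + (ρn (i + 1) j * DX h cn i j * u i j
            + ρn (i - 1) j * DX h cn (i - 1) j * u (i - 1) j) / 2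
        + (ρn i (j + 1) * DY h cn i j * v i j
            + ρn i (j - 1) * DY h cn i (j - 1) * v i (j - 1)) / 2
        = 1 / Pe * fluxμ i j + α / Pe * fluxp i j) →
    ip2 m₁ m₂ ρn1 oneG = ip2 m₁ m₂ ρn oneG :=
  fully_discrete_primitive_mass_conservation_general m₁ m₂ h δt Pe ε ρ₁ ρ₂ hm₁ hm₂ hδt hρ₁ hρ₂ cn
    cn1 μb pb u v hne hubc hvbc
end

section
/- Mass conservation for the fully discrete projection scheme (Theorem 6.3). Let δt > 0, let cⁿ, cⁿ⁺¹, μ̄ⁿ⁺¹, p̄ⁿ⁺¹ be cell-centered grid functions (with ghost values), let (uⁿ⁺¹, vⁿ⁺¹) be an edge-centered velocity satisfying uⁿ⁺¹_{1/2,j} = uⁿ⁺¹_{m₁+1/2,j} = 0 for 1 ≤ j ≤ m₂ and vⁿ⁺¹_{i,1/2} = vⁿ⁺¹_{i,m₂+1/2} = 0 for 1 ≤ i ≤ m₁, and set ρᵏ_{i,j} := ρ(cᵏ_{i,j}) for k = n, n+1 (assuming (ρ₂−ρ₁)cᵏ_{i,j}+ρ₁ ≠ 0 at all grid points used). Suppose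 that for all 1 ≤ i ≤ m₁, 1 ≤ j ≤ m₂: (continuity) d_x uⁿ⁺¹_{i,j} + d_y vⁿ⁺¹_{i,j} = (α/Pe)[d_x(A_x m(cⁿ)·D_x μ̄ⁿ⁺¹) + d_y(A_y m(cⁿ)·D_y μ̄ⁿ⁺¹)]_{i,j} + (α²/Pe)[d_x(A_x m(cⁿ)·D_x p̄ⁿ⁺¹) + d_y(A_y m(cⁿ)·D_y p̄ⁿ⁺¹)]_{i,j}; (phase) ρⁿ_{i,j}(cⁿ⁺¹_{i,j}−cⁿ_{i,j})/δt + ½[ρⁿ⁺¹_{i+1,j} D_x cⁿ⁺¹_{i+1/2,j} uⁿ⁺¹_{i+1/2,j} + ρⁿ⁺¹_{i−1,j} D_x cⁿ⁺¹_{i−1/2,j} uⁿ⁺¹_{i−1/2,j}] + ½[ρⁿ⁺¹_{i,j+1} D_y cⁿ⁺¹_{i,j+1/2} vⁿ⁺¹_{i,j+1/2} + ρⁿ⁺¹_{i,j−1} D_y cⁿ⁺¹_{i,j−1/2} vⁿ⁺¹_{i,j−1/2}] = (1/Pe)[d_x(A_x m(cⁿ)·D_x μ̄ⁿ⁺¹)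 + d_y(A_y m(cⁿ)·D_y μ̄ⁿ⁺¹)]_{i,j} + (α/Pe)[d_x(A_x m(cⁿ)·D_x p̄ⁿ⁺¹) + d_y(A_y m(cⁿ)·D_y p̄ⁿ⁺¹)]_{i,j}. Then (ρⁿ⁺¹, 1)₂ = (ρⁿ, 1)₂. -/
open Finset

/-! Since `1 / ρ(c) = α c + 1 / ρ₂` is affine in `c`, subtracting `α` times the phase equation
from the continuity equation cancels the chemical-potential and pressure fluxes, and multiplying
the remaining cell equation by `ρⁿ⁺¹_{i,j}` puts it in conservative form
`ρⁿ⁺¹ - ρⁿ = -δt (d_x (u A_x ρⁿ⁺¹) + d_y (v A_y ρⁿ⁺¹))`.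
Summed over the cells, the right-hand side telescopes to boundary fluxes, which vanish. -/

theorem sum_Icc_one_sub_sub_one {M : Type*} [AddCommGroup M] (f : ℤ → M) {m : ℤ} (hm : 0 ≤ m) :
    ∑ i ∈ Icc 1 m, (f i - f (i - 1)) = f m - f 0 := by
  induction m, hm using Int.leInduction with
  | base => simp
  | succ n hn ih =>
    rw [← insert_Icc_right_eq_Icc_add_one (by omega), sum_insert (by simp), ih, add_sub_cancel_right]
    abel

theorem ip2_dX_oneG_eq_zero (m₁ m₂ : ℤ) (h : ℝ) {w : GridFn}
    (hw : ∀ j ∈ Icc 1 m₂, w 0 j = 0 ∧ w m₁ j = 0) : ip2 m₁ m₂ (dX h w) oneG = 0 := by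
  rcases lt_or_ge m₁ 0 with hm | hm
  · simp [ip2, Icc_eq_empty_of_lt (show m₁ < 1 by omega)]
  simp only [ip2, dX, oneG, mul_one]
  rw [sum_comm]
  refine sum_eq_zero fun j hj => ?_
  rw [← sum_div, sum_Icc_one_sub_sub_one (w · j) hm, (hw j hj).1, (hw j hj).2, sub_zero, zero_div]

theorem ip2_dY_oneG_eq_zero (m₁ m₂ : ℤ) (h : ℝ) {w : GridFn}
    (hw : ∀ i ∈ Icc 1 m₁, w i 0 = 0 ∧ w i m₂ = 0) : ip2 m₁ m₂ (dY h w) oneG = 0 := by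
  rcases lt_or_ge m₂ 0 with hm | hm
  · simp [ip2, Icc_eq_empty_of_lt (show m₂ < 1 by omega)]
  simp only [ip2, dY, oneG, mul_one]
  refine sum_eq_zero fun i hi => ?_
  rw [← sum_div, sum_Icc_one_sub_sub_one (w i ·) hm, (hw i hi).1, (hw i hi).2, sub_zero, zero_div]

theorem ip2_oneG_eq_of_conservation {m₁ m₂ : ℤ} {h δt : ℝ} {R S U V : GridFn}
    (hU : ∀ j ∈ Icc 1 m₂, U 0 j = 0 ∧ U m₁ j = 0) (hV : ∀ i ∈ Icc 1 m₁, V i 0 = 0 ∧ V i m₂ = 0)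
    (hcons : ∀ i ∈ Icc 1 m₁, ∀ j ∈ Icc 1 m₂, S i j - R i j = -δt * (dX h U i j + dY h V i j)) :
    ip2 m₁ m₂ S oneG = ip2 m₁ m₂ R oneG := by
  have hdiff : ip2 m₁ m₂ S oneG - ip2 m₁ m₂ R oneG
      = -δt * (ip2 m₁ m₂ (dX h U) oneG + ip2 m₁ m₂ (dY h V) oneG) := by
    simp only [ip2, oneG, mul_one, ← sum_sub_distrib, ← sum_add_distrib, mul_sum]
    exact sum_congr rfl fun i hi => sum_congr rfl fun j hj => hcons i hi j hj
  rw [← sub_eq_zero, hdiff, ip2_dX_oneG_eq_zero m₁ m₂ h hU, ip2_dY_oneG_eq_zero m₁ m₂ h hV,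
    add_zero, mul_zero]

theorem mixture_density_sub_mixture_density {ρ₁ ρ₂ a b : ℝ} (hρ₁ : ρ₁ ≠ 0) (hρ₂ : ρ₂ ≠ 0)
    (ha : (ρ₂ - ρ₁) * a + ρ₁ ≠ 0) (hb : (ρ₂ - ρ₁) * b + ρ₁ ≠ 0) :
    ρ₁ * ρ₂ / ((ρ₂ - ρ₁) * b + ρ₁) - ρ₁ * ρ₂ / ((ρ₂ - ρ₁) * a + ρ₁)
      = (ρ₂ - ρ₁) / (ρ₁ * ρ₂) * (ρ₁ * ρ₂ / ((ρ₂ - ρ₁) * a + ρ₁))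
          * (ρ₁ * ρ₂ / ((ρ₂ - ρ₁) * b + ρ₁)) * (a - b) := by
  field_simp
  ring

theorem cell_density_conservation {α Pe h δt Fμ Fp ρ₀ ρP ρE ρW ρN ρS c₀ cP cE cW cN cS
      uE uW vN vS : ℝ}
    (hh : h ≠ 0) (hδt : δt ≠ 0)
    (h₀ : ρ₀ - ρP = α * ρP * ρ₀ * (cP - c₀))
    (hE : ρP - ρE = α * ρE * ρP * (cE - cP)) (hW : ρW - ρP = α * ρP * ρW * (cP - cW))
    (hN : ρP - ρN = α * ρN * ρP * (cN - cP)) (hS : ρS - ρP = α * ρP * ρS * (cP - cS))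
    (hcont : (uE - uW) / h + (vN - vS) / h = α / Pe * Fμ + α ^ 2 / Pe * Fp)
    (hphase : ρ₀ * (cP - c₀) / δt
        + (ρE * ((cE - cP) / h) * uE + ρW * ((cP - cW) / h) * uW) / 2
        + (ρN * ((cN - cP) / h) * vN + ρS * ((cP - cS) / h) * vS) / 2
        = 1 / Pe * Fμ + α / Pe * Fp) :
    ρP - ρ₀ = -δt * ((uE * ((ρE + ρP) / 2) - uW * ((ρP + ρW) / 2)) / h
      + (vN * ((ρN + ρP) / 2) - vS * ((ρP + ρS) / 2)) / h) := by
  have hdiv : (uE - uW) / h + (vN - vS) / h = α * (ρ₀ * (cP - c₀) / δt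
        + (ρE * ((cE - cP) / h) * uE + ρW * ((cP - cW) / h) * uW) / 2
        + (ρN * ((cN - cP) / h) * vN + ρS * ((cP - cS) / h) * vS) / 2) := by
    linear_combination hcont - α * hphase
  field_simp at hdiv ⊢
  linear_combination ρP * hdiv - 2 * h * h₀ - δt * uE * hE - δt * uW * hW - δt * vN * hN
    - δt * vS * hS

theorem fully_discrete_projection_mass_conservation_general
    (m₁ m₂ : ℤ) (h δt Pe ε ρ₁ ρ₂ : ℝ)
    (hh : 0 < h) (hδt : 0 < δt)
    (hρ₁ : 0 < ρ₁) (hρ₂ : 0 < ρ₂)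
    (cn cn1 μb pb u v : GridFn)
    -- nonvanishing of the density denominator at all grid points used
    (hne : ∀ i ∈ Icc 0 (m₁ + 1), ∀ j ∈ Icc 0 (m₂ + 1),
      (ρ₂ - ρ₁) * cn i j + ρ₁ ≠ 0 ∧ (ρ₂ - ρ₁) * cn1 i j + ρ₁ ≠ 0)
    -- normal boundary values of the velocity vanish
    (hubc : ∀ j ∈ Icc 1 m₂, u 0 j = 0 ∧ u m₁ j = 0)
    (hvbc : ∀ i ∈ Icc 1 m₁, v i 0 = 0 ∧ v i m₂ = 0) :
    let α : ℝ := (ρ₂ - ρ₁) / (ρ₁ * ρ₂)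
    let ρfun : ℝ → ℝ := fun s => ρ₁ * ρ₂ / ((ρ₂ - ρ₁) * s + ρ₁)
    let mfun : ℝ → ℝ := fun s => Real.sqrt (s ^ 2 * (1 - s) ^ 2 + ε)
    let ρn : GridFn := fun i j => ρfun (cn i j)
    let ρn1 : GridFn := fun i j => ρfun (cn1 i j)
    let mc : GridFn := fun i j => mfun (cn i j)
    let fluxμ : GridFn := fun i j =>
      dX h (gmul (AX mc) (DX h μb)) i j + dY h (gmul (AY mc) (DY h μb)) i j
    let fluxp : GridFn := fun i j =>
      dX h (gmul (AX mc) (DX h pb)) i j + dY h (gmul (AY mc) (DY h pb)) i j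
    -- discrete continuity equation
    (∀ i ∈ Icc 1 m₁, ∀ j ∈ Icc 1 m₂,
      dX h u i j + dY h v i j = α / Pe * fluxμ i j + α ^ 2 / Pe * fluxp i j) →
    -- discrete phase equation
    (∀ i ∈ Icc 1 m₁, ∀ j ∈ Icc 1 m₂,
      ρn i j * (cn1 i j - cn i j) / δt
        + (ρn1 (i + 1) j * DX h cn1 i j * u i j
            + ρn1 (i - 1) j * DX h cn1 (i - 1) j * u (i - 1) j) / 2
        + (ρn1 i (j + 1) * DY h cn1 i j * v i j
            + ρn1 i (j - 1) * DY h cn1 i (j - 1) * v i (j - 1)) / 2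
        = 1 / Pe * fluxμ i j + α / Pe * fluxp i j) →
    ip2 m₁ m₂ ρn1 oneG = ip2 m₁ m₂ ρn oneG := by
  intro α ρfun mfun ρn ρn1 mc fluxμ fluxp hcont hphase
  refine ip2_oneG_eq_of_conservation (δt := δt) (h := h) (U := gmul u (AX ρn1))
    (V := gmul v (AY ρn1)) (fun j hj => ?_) (fun i hi => ?_) fun i hi j hj => ?_
  · simp [gmul, hubc j hj]
  · simp [gmul, hvbc i hi]
  obtain ⟨hi₁, hi₂⟩ := mem_Icc.mp hi
  obtain ⟨hj₁, hj₂⟩ := mem_Icc.mp hj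
  have hden (a b : ℤ) (ha : 0 ≤ a ∧ a ≤ m₁ + 1) (hb : 0 ≤ b ∧ b ≤ m₂ + 1) :=
    hne a (mem_Icc.mpr ha) b (mem_Icc.mpr hb)
  have hρ (a b : ℝ) (ha : (ρ₂ - ρ₁) * a + ρ₁ ≠ 0) (hb : (ρ₂ - ρ₁) * b + ρ₁ ≠ 0) :
      ρfun b - ρfun a = α * ρfun a * ρfun b * (a - b) :=
    mixture_density_sub_mixture_density hρ₁.ne' hρ₂.ne' ha hb
  have hP := (hden i j (by omega) (by omega)).2
  have h₀ := hρ (cn1 i j) (cn i j) hP (hden i j (by omega) (by omega)).1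
  have hE := hρ (cn1 (i + 1) j) (cn1 i j) (hden (i + 1) j (by omega) (by omega)).2 hP
  have hW := hρ (cn1 i j) (cn1 (i - 1) j) hP (hden (i - 1) j (by omega) (by omega)).2
  have hN := hρ (cn1 i (j + 1)) (cn1 i j) (hden i (j + 1) (by omega) (by omega)).2 hP
  have hS := hρ (cn1 i j) (cn1 i (j - 1)) hP (hden i (j - 1) (by omega) (by omega)).2
  have hphase' := hphase i hi j hj
  simp only [DX, DY, sub_add_cancel] at hphase'
  simp only [dX, dY, gmul, AX, AY, sub_add_cancel]
  exact cell_density_conservation hh.ne' hδt.ne' h₀ hE hW hN hS (hcont i hi j hj) hphase'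

/-- Theorem 6.3: total-mass conservation for the fully discrete projection scheme.
Here `ρ(c) = ρ₁ρ₂/((ρ₂−ρ₁)c+ρ₁)`, `m(c) = √(c²(1−c)²+ε)` and
`α = (ρ₂−ρ₁)/(ρ₁ρ₂)`. -/
theorem fully_discrete_projection_mass_conservation
    (m₁ m₂ : ℤ) (h δt Pe ε ρ₁ ρ₂ : ℝ)
    (hm₁ : 1 ≤ m₁) (hm₂ : 1 ≤ m₂) (hh : 0 < h) (hδt : 0 < δt)
    (hPe : 0 < Pe) (hε : 0 < ε) (hρ₁ : 0 < ρ₁) (hρ₂ : 0 < ρ₂)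
    (cn cn1 μb pb u v : GridFn)
    -- nonvanishing of the density denominator at all grid points used
    (hne : ∀ i ∈ Icc 0 (m₁ + 1), ∀ j ∈ Icc 0 (m₂ + 1),
      (ρ₂ - ρ₁) * cn i j + ρ₁ ≠ 0 ∧ (ρ₂ - ρ₁) * cn1 i j + ρ₁ ≠ 0)
    -- normal boundary values of the velocity vanish
    (hubc : ∀ j ∈ Icc 1 m₂, u 0 j = 0 ∧ u m₁ j = 0)
    (hvbc : ∀ i ∈ Icc 1 m₁, v i 0 = 0 ∧ v i m₂ = 0) :
    let α : ℝ := (ρ₂ - ρ₁) / (ρ₁ * ρ₂)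
    let ρfun : ℝ → ℝ := fun s => ρ₁ * ρ₂ / ((ρ₂ - ρ₁) * s + ρ₁)
    let mfun : ℝ → ℝ := fun s => Real.sqrt (s ^ 2 * (1 - s) ^ 2 + ε)
    let ρn : GridFn := fun i j => ρfun (cn i j)
    let ρn1 : GridFn := fun i j => ρfun (cn1 i j)
    let mc : GridFn := fun i j => mfun (cn i j)
    let fluxμ : GridFn := fun i j =>
      dX h (gmul (AX mc) (DX h μb)) i j + dY h (gmul (AY mc) (DY h μb)) i j
    let fluxp : GridFn := fun i j =>
      dX h (gmul (AX mc) (DX h pb)) i j + dY h (gmul (AY mc) (DY h pb)) i j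
    -- discrete continuity equation
    (∀ i ∈ Icc 1 m₁, ∀ j ∈ Icc 1 m₂,
      dX h u i j + dY h v i j = α / Pe * fluxμ i j + α ^ 2 / Pe * fluxp i j) →
    -- discrete phase equation
    (∀ i ∈ Icc 1 m₁, ∀ j ∈ Icc 1 m₂,
      ρn i j * (cn1 i j - cn i j) / δt
        + (ρn1 (i + 1) j * DX h cn1 i j * u i j
            + ρn1 (i - 1) j * DX h cn1 (i - 1) j * u (i - 1) j) / 2
        + (ρn1 i (j + 1) * DY h cn1 i j * v i j
            + ρn1 i (j - 1) * DY h cn1 i (j - 1) * v i (j - 1)) / 2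
        = 1 / Pe * fluxμ i j + α / Pe * fluxp i j) →
    ip2 m₁ m₂ ρn1 oneG = ip2 m₁ m₂ ρn oneG :=
  fully_discrete_projection_mass_conservation_general m₁ m₂ h δt Pe ε ρ₁ ρ₂ hh hδt hρ₁ hρ₂ cn cn1 μb
    pb u v hne hubc hvbc
end

section
/- Discrete summation-by-parts for the cross-direction viscous term under periodic boundary conditions (Proposition A.5). Suppose φ is a cell-centered grid function, u, γ are east-west edge-centered grid functions and all three are doubly periodic with periods m₁ and m₂ (i.e. φ_{i+m₁,j} = φ_{i,j+m₂} = φ_{i,j}, and likewise for u and γ in the edge indexing). Then h²[𝔇_y(𝒜φ·𝒟_yu), γ]_ew = −h²⟨φ·𝒟_yu, 𝒟_yγ⟩_vc, where 𝒜φ·𝒟_yu denotes the vertex-centered pointwise product. Analogously, if v, ω are doubly periodic north-south edge-centered grid functions, then h²[𝔇_x(𝒜φ·𝒟_xv), ω]_ns = −h²⟨φ·𝒟_xv, 𝒟_xω⟩_vc. -/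
open Finset

/-! Both identities reduce to one-dimensional facts about periodic sequences, applied row by row
or column by column. Summation by parts moves the backward difference `𝔇_y` onto `γ` as `-𝒟_y`,
and the average `a_x` inside `[·,·]_ew` leaves the sum of a periodic function unchanged. The
factor `𝒜φ` then moves across because `𝒜 = A_x A_y` while the vertex-to-center average is
`a_y a_x`, and each forward two-point average is adjoint to the backward one after a periodic
shift of the summation index. -/

namespace Function.Periodic

variable {M K : Type*} [AddCommMonoid M] [Field K] {m : ℤ}

theorem sum_Icc_comp_add_one {f : ℤ → M} (hf : Periodic f m) :
    ∑ j ∈ Icc 1 m, f (j + 1) = ∑ j ∈ Icc 1 m, f j := by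
  rcases lt_or_ge m 1 with hm | hm
  · simp [Icc_eq_empty_of_lt hm]
  have hwrap : f (m + 1) = f 1 := by rw [add_comm, hf]
  have hreindex : ∑ j ∈ Icc 1 m, f (j + 1) = ∑ j ∈ Icc (1 + 1) (m + 1), f j := by
    rw [← map_add_right_Icc, sum_map]
    rfl
  rw [hreindex, ← insert_Icc_right_eq_Icc_add_one (by omega), sum_insert (by simp), hwrap,
    ← insert_Icc_add_one_left_eq_Icc hm, sum_insert (by simp), add_comm]

theorem sum_Icc_comp_sub_one {f : ℤ → M} (hf : Periodic f m) :
    ∑ j ∈ Icc 1 m, f (j - 1) = ∑ j ∈ Icc 1 m, f j := by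
  simpa using (hf.sub_const 1).sum_Icc_comp_add_one.symm

theorem sum_Icc_add_comp_sub_one_div_two [CharZero K] {f : ℤ → K} (hf : Periodic f m) :
    ∑ j ∈ Icc 1 m, (f j + f (j - 1)) / 2 = ∑ j ∈ Icc 1 m, f j := by
  rw [← sum_div, sum_add_distrib, hf.sum_Icc_comp_sub_one, add_self_div_two]

theorem sum_Icc_forward_avg_mul {a b : ℤ → K} (ha : Periodic a m) (hb : Periodic b m) :
    ∑ j ∈ Icc 1 m, (a (j + 1) + a j) / 2 * b j
      = ∑ j ∈ Icc 1 m, a j * ((b j + b (j - 1)) / 2) := by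
  have hshift : ∑ j ∈ Icc 1 m, a (j + 1) * b j = ∑ j ∈ Icc 1 m, a j * b (j - 1) := by
    simpa using (ha.mul (hb.sub_const 1)).sum_Icc_comp_add_one
  simp only [div_mul_eq_mul_div, mul_div_assoc', ← sum_div, add_mul, mul_add, sum_add_distrib,
    hshift]
  ring

theorem sum_Icc_backward_diff_mul {a b : ℤ → K} (ha : Periodic a m) (hb : Periodic b m) (h : K) :
    ∑ j ∈ Icc 1 m, (a j - a (j - 1)) / h * b j
      = -∑ j ∈ Icc 1 m, a j * ((b (j + 1) - b j) / h) := by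
  have hshift : ∑ j ∈ Icc 1 m, a (j - 1) * b j = ∑ j ∈ Icc 1 m, a j * b (j + 1) := by
    simpa using ((ha.sub_const 1).mul hb).sum_Icc_comp_add_one.symm
  simp only [div_mul_eq_mul_div, mul_div_assoc', ← sum_div, sub_mul, mul_sub, sum_sub_distrib,
    hshift]
  ring

end Function.Periodic

def DoublyPeriodic (m₁ m₂ : ℤ) (f : GridFn) : Prop :=
  ∀ i j, f (i + m₁) j = f i j ∧ f i (j + m₂) = f i j

namespace DoublyPeriodic

variable {m₁ m₂ : ℤ} {f g : GridFn}

theorem periodic_fst (hf : DoublyPeriodic m₁ m₂ f) (j : ℤ) :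
    Function.Periodic (fun i => f i j) m₁ :=
  fun i => (hf i j).1

theorem periodic_snd (hf : DoublyPeriodic m₁ m₂ f) (i : ℤ) : Function.Periodic (f i) m₂ :=
  fun j => (hf i j).2

theorem gmul (hf : DoublyPeriodic m₁ m₂ f) (hg : DoublyPeriodic m₁ m₂ g) :
    DoublyPeriodic m₁ m₂ (gmul f g) :=
  fun i j => ⟨by simp only [_root_.gmul, (hf i j).1, (hg i j).1],
    by simp only [_root_.gmul, (hf i j).2, (hg i j).2]⟩

theorem cavV (hf : DoublyPeriodic m₁ m₂ f) : DoublyPeriodic m₁ m₂ (cavV f) :=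
  fun i j => ⟨by simp only [_root_.cavV, add_right_comm i m₁ 1, (hf _ _).1],
    by simp only [_root_.cavV, add_right_comm j m₂ 1, (hf _ _).2]⟩

theorem AY (hf : DoublyPeriodic m₁ m₂ f) : DoublyPeriodic m₁ m₂ (AY f) :=
  fun i j => ⟨by simp only [_root_.AY, (hf _ _).1],
    by simp only [_root_.AY, add_right_comm j m₂ 1, (hf _ _).2]⟩

theorem aX (hf : DoublyPeriodic m₁ m₂ f) : DoublyPeriodic m₁ m₂ (aX f) :=
  fun i j => ⟨by simp only [_root_.aX, ← sub_add_eq_add_sub, (hf _ _).1],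
    by simp only [_root_.aX, (hf _ _).2]⟩

theorem eDX (hf : DoublyPeriodic m₁ m₂ f) (h : ℝ) : DoublyPeriodic m₁ m₂ (eDX h f) :=
  fun i j => ⟨by simp only [_root_.eDX, add_right_comm i m₁ 1, (hf _ _).1],
    by simp only [_root_.eDX, (hf _ _).2]⟩

theorem eDY (hf : DoublyPeriodic m₁ m₂ f) (h : ℝ) : DoublyPeriodic m₁ m₂ (eDY h f) :=
  fun i j => ⟨by simp only [_root_.eDY, (hf _ _).1],
    by simp only [_root_.eDY, add_right_comm j m₂ 1, (hf _ _).2]⟩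

theorem vDX (hf : DoublyPeriodic m₁ m₂ f) (h : ℝ) : DoublyPeriodic m₁ m₂ (vDX h f) :=
  fun i j => ⟨by simp only [_root_.vDX, ← sub_add_eq_add_sub, (hf _ _).1],
    by simp only [_root_.vDX, (hf _ _).2]⟩

theorem vDY (hf : DoublyPeriodic m₁ m₂ f) (h : ℝ) : DoublyPeriodic m₁ m₂ (vDY h f) :=
  fun i j => ⟨by simp only [_root_.vDY, (hf _ _).1],
    by simp only [_root_.vDY, ← sub_add_eq_add_sub, (hf _ _).2]⟩

end DoublyPeriodic

section InnerProducts

variable {m₁ m₂ : ℤ} {f g φ : GridFn}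

theorem ip2_eq_sum_comm (m₁ m₂ : ℤ) (f g : GridFn) :
    ip2 m₁ m₂ f g = ∑ j ∈ Icc 1 m₂, ∑ i ∈ Icc 1 m₁, f i j * g i j :=
  sum_comm

theorem ip2_gmul_left (m₁ m₂ : ℤ) (f g k : GridFn) :
    ip2 m₁ m₂ (gmul f g) k = ip2 m₁ m₂ f (gmul g k) := by
  simp only [ip2, _root_.gmul, mul_assoc]

theorem ipEW_eq_ip2 (hf : DoublyPeriodic m₁ m₂ f) (hg : DoublyPeriodic m₁ m₂ g) :
    ipEW m₁ m₂ f g = ip2 m₁ m₂ f g := by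
  rw [ipEW, ip2_eq_sum_comm, ip2_eq_sum_comm]
  simp only [aX, oneG, mul_one]
  exact sum_congr rfl fun j _ => ((hf.gmul hg).periodic_fst j).sum_Icc_add_comp_sub_one_div_two

theorem ipNS_eq_ip2 (hf : DoublyPeriodic m₁ m₂ f) (hg : DoublyPeriodic m₁ m₂ g) :
    ipNS m₁ m₂ f g = ip2 m₁ m₂ f g := by
  simp only [ipNS, ip2, aY, oneG, mul_one]
  exact sum_congr rfl fun i _ => ((hf.gmul hg).periodic_snd i).sum_Icc_add_comp_sub_one_div_two

theorem ip2_vDX_left (hf : DoublyPeriodic m₁ m₂ f) (hg : DoublyPeriodic m₁ m₂ g) (h : ℝ) :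
    ip2 m₁ m₂ (vDX h f) g = -ip2 m₁ m₂ f (eDX h g) := by
  rw [ip2_eq_sum_comm, ip2_eq_sum_comm, ← sum_neg_distrib]
  simp only [vDX, eDX]
  exact sum_congr rfl fun j _ => (hf.periodic_fst j).sum_Icc_backward_diff_mul (hg.periodic_fst j) h

theorem ip2_vDY_left (hf : DoublyPeriodic m₁ m₂ f) (hg : DoublyPeriodic m₁ m₂ g) (h : ℝ) :
    ip2 m₁ m₂ (vDY h f) g = -ip2 m₁ m₂ f (eDY h g) := by
  rw [ip2, ip2, ← sum_neg_distrib]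
  simp only [vDY, eDY]
  exact sum_congr rfl fun i _ => (hf.periodic_snd i).sum_Icc_backward_diff_mul (hg.periodic_snd i) h

theorem ip2_AX_left (hφ : DoublyPeriodic m₁ m₂ φ) (hg : DoublyPeriodic m₁ m₂ g) :
    ip2 m₁ m₂ (AX φ) g = ip2 m₁ m₂ φ (aX g) := by
  simp only [ip2_eq_sum_comm, AX, aX]
  exact sum_congr rfl fun j _ => (hφ.periodic_fst j).sum_Icc_forward_avg_mul (hg.periodic_fst j)

theorem ip2_AY_left (hφ : DoublyPeriodic m₁ m₂ φ) (hg : DoublyPeriodic m₁ m₂ g) :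
    ip2 m₁ m₂ (AY φ) g = ip2 m₁ m₂ φ (aY g) := by
  simp only [ip2, AY, aY]
  exact sum_congr rfl fun i _ => (hφ.periodic_snd i).sum_Icc_forward_avg_mul (hg.periodic_snd i)

theorem cavV_eq_AX_AY (φ : GridFn) : cavV φ = AX (AY φ) := by
  funext i j
  simp only [cavV, AX, AY]
  ring

theorem vavC_eq_aY_aX (f : GridFn) : vavC f = aY (aX f) := by
  funext i j
  simp only [vavC, aX, aY]
  ring

theorem ip2_cavV_left (hφ : DoublyPeriodic m₁ m₂ φ) (hg : DoublyPeriodic m₁ m₂ g) :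
    ip2 m₁ m₂ (cavV φ) g = ip2 m₁ m₂ φ (vavC g) := by
  rw [cavV_eq_AX_AY, vavC_eq_aY_aX, ip2_AX_left hφ.AY hg, ip2_AY_left hφ hg.aX]

end InnerProducts

/-- Proposition A.5: discrete summation-by-parts for the cross-direction viscous
term under doubly periodic boundary conditions, in both directions.  Here the
vertex-centered inner product is `⟨φ f, g⟩_vc = (φ, 𝒜(fg))₂`, `𝒜` being the
(vertex-to-center) four-point average. -/
theorem discrete_sbp_viscous_cross_direction_periodic
    (m₁ m₂ : ℤ) (h : ℝ) (φ u γ v ω : GridFn)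
    (hφ : ∀ i j : ℤ, φ (i + m₁) j = φ i j ∧ φ i (j + m₂) = φ i j)
    (hu : ∀ i j : ℤ, u (i + m₁) j = u i j ∧ u i (j + m₂) = u i j)
    (hγ : ∀ i j : ℤ, γ (i + m₁) j = γ i j ∧ γ i (j + m₂) = γ i j)
    (hv : ∀ i j : ℤ, v (i + m₁) j = v i j ∧ v i (j + m₂) = v i j)
    (hω : ∀ i j : ℤ, ω (i + m₁) j = ω i j ∧ ω i (j + m₂) = ω i j) :
    h ^ 2 * ipEW m₁ m₂ (vDY h (gmul (cavV φ) (eDY h u))) γ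
        = -(h ^ 2 * ip2 m₁ m₂ φ (vavC (gmul (eDY h u) (eDY h γ)))) ∧
    h ^ 2 * ipNS m₁ m₂ (vDX h (gmul (cavV φ) (eDX h v))) ω
        = -(h ^ 2 * ip2 m₁ m₂ φ (vavC (gmul (eDX h v) (eDX h ω)))) := by
  have hφ : DoublyPeriodic m₁ m₂ φ := hφ
  have hu : DoublyPeriodic m₁ m₂ u := hu
  have hγ : DoublyPeriodic m₁ m₂ γ := hγ
  have hv : DoublyPeriodic m₁ m₂ v := hv
  have hω : DoublyPeriodic m₁ m₂ ω := hω
  have hFy := hφ.cavV.gmul (hu.eDY h)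
  have hFx := hφ.cavV.gmul (hv.eDX h)
  constructor
  · rw [ipEW_eq_ip2 (hFy.vDY h) hγ, ip2_vDY_left hFy hγ, ip2_gmul_left,
      ip2_cavV_left hφ ((hu.eDY h).gmul (hγ.eDY h)), mul_neg]
  · rw [ipNS_eq_ip2 (hFx.vDX h) hω, ip2_vDX_left hFx hω, ip2_gmul_left,
      ip2_cavV_left hφ ((hv.eDX h).gmul (hω.eDX h)), mul_neg]
end

section
/- Pointwise discrete conversion of the phase-advection term into a density-advection term. Let c be a cell-centered grid function (with ghost values), set ρ_{i,j} := ρ(c_{i,j}) (assuming (ρ₂−ρ₁)c_{i,j}+ρ₁ ≠ 0 at all grid points used), and let (u,v) be edge-centered velocity components. Then for every 1 ≤ i ≤ m₁, 1 ≤ j ≤ m₂: −α ρ_{i,j} · ½[ρ_{i+1,j} D_xc_{i+1/2,j} u_{i+1/2,j} + ρ_{i−1,j} D_xc_{i−1/2,j} u_{i−1/2,j}] = ½[D_xρ_{i+1/2,j} u_{i+1/2,j} + D_xρ_{i−1/2,j} u_{i−1/2,j}] = a_x(u·D_xρ)_{i,j}, and −α ρ_{i,j} · ½[ρ_{i,j+1}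 D_yc_{i,j+1/2} v_{i,j+1/2} + ρ_{i,j−1} D_yc_{i,j−1/2} v_{i,j−1/2}] = a_y(v·D_yρ)_{i,j}. Consequently, summing over all cells, (a_x(ρ_ew·D_xc·u) + a_y(ρ_ns·D_yc·v), −αρ)₂ = (a_x(u·D_xρ) + a_y(v·D_yρ), 1)₂, where a_x(ρ_ew·D_xc·u)_{i,j} := ½[ρ_{i+1,j}D_xc_{i+1/2,j}u_{i+1/2,j} + ρ_{i−1,j}D_xc_{i−1/2,j}u_{i−1/2,j}] and a_y(ρ_ns·D_yc·v)_{i,j} := ½[ρ_{i,j+1}D_yc_{i,j+1/2}v_{i,j+1/2} + ρ_{i,j−1}D_yc_{i,j−1/2}v_{i,j−1/2}]. -/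
open Finset

/-- Pointwise discrete conversion of the phase-advection term into a
density-advection term, and the resulting summed identity.  Here
`ρ(c) = ρ₁ρ₂/((ρ₂−ρ₁)c+ρ₁)` and `α = (ρ₂−ρ₁)/(ρ₁ρ₂)`. -/
theorem discrete_phase_advection_to_density_advection
    (m₁ m₂ : ℤ) (h : ℝ) (ρ₁ ρ₂ : ℝ) (hρ₁ : 0 < ρ₁) (hρ₂ : 0 < ρ₂)
    (c u v : GridFn)
    (hne : ∀ i ∈ Icc 0 (m₁ + 1), ∀ j ∈ Icc 0 (m₂ + 1),
      (ρ₂ - ρ₁) * c i j + ρ₁ ≠ 0) :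
    let α : ℝ := (ρ₂ - ρ₁) / (ρ₁ * ρ₂)
    let ρ : GridFn := fun i j => ρ₁ * ρ₂ / ((ρ₂ - ρ₁) * c i j + ρ₁)
    let advx : GridFn := fun i j =>
      (ρ (i + 1) j * DX h c i j * u i j + ρ (i - 1) j * DX h c (i - 1) j * u (i - 1) j) / 2
    let advy : GridFn := fun i j =>
      (ρ i (j + 1) * DY h c i j * v i j + ρ i (j - 1) * DY h c i (j - 1) * v i (j - 1)) / 2
    (∀ i ∈ Icc 1 m₁, ∀ j ∈ Icc 1 m₂,
      -α * ρ i j * advx i j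
          = (DX h ρ i j * u i j + DX h ρ (i - 1) j * u (i - 1) j) / 2 ∧
      (DX h ρ i j * u i j + DX h ρ (i - 1) j * u (i - 1) j) / 2
          = aX (gmul u (DX h ρ)) i j ∧
      -α * ρ i j * advy i j = aY (gmul v (DY h ρ)) i j) ∧
    ip2 m₁ m₂ (fun i j => advx i j + advy i j) (fun i j => -α * ρ i j)
      = ip2 m₁ m₂ (fun i j => aX (gmul u (DX h ρ)) i j + aY (gmul v (DY h ρ)) i j) oneG := by
  intro α ρ advx advy
  have hρ₁₂ : ρ₁ * ρ₂ ≠ 0 := by positivity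
  have sec : ∀ a b : ℝ, (ρ₂ - ρ₁) * a + ρ₁ ≠ 0 → (ρ₂ - ρ₁) * b + ρ₁ ≠ 0 →
      ρ₁ * ρ₂ / ((ρ₂ - ρ₁) * a + ρ₁) - ρ₁ * ρ₂ / ((ρ₂ - ρ₁) * b + ρ₁) =
      -α * (ρ₁ * ρ₂ / ((ρ₂ - ρ₁) * a + ρ₁)) * (ρ₁ * ρ₂ / ((ρ₂ - ρ₁) * b + ρ₁)) * (a - b) := by
    intro a b ha hb
    show _ = -((ρ₂ - ρ₁) / (ρ₁ * ρ₂)) * _ * _ * _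
    field_simp
    ring
  have keyX : ∀ i j, (ρ₂ - ρ₁) * c i j + ρ₁ ≠ 0 → (ρ₂ - ρ₁) * c (i + 1) j + ρ₁ ≠ 0 →
      DX h ρ i j = -α * ρ (i + 1) j * ρ i j * DX h c i j := by
    intro i j hi hi1
    show (ρ (i + 1) j - ρ i j) / h = _
    rw [sec _ _ hi1 hi]
    show _ = _ * ((c (i+1) j - c i j)/h)
    ring
  have keyY : ∀ i j, (ρ₂ - ρ₁) * c i j + ρ₁ ≠ 0 → (ρ₂ - ρ₁) * c i (j + 1) + ρ₁ ≠ 0 →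
      DY h ρ i j = -α * ρ i (j + 1) * ρ i j * DY h c i j := by
    intro i j hi hi1
    show (ρ i (j + 1) - ρ i j) / h = _
    rw [sec _ _ hi1 hi]
    show _ = _ * ((c i (j+1) - c i j)/h)
    ring
  have main : ∀ i ∈ Icc 1 m₁, ∀ j ∈ Icc 1 m₂,
      -α * ρ i j * advx i j
          = (DX h ρ i j * u i j + DX h ρ (i - 1) j * u (i - 1) j) / 2 ∧
      (DX h ρ i j * u i j + DX h ρ (i - 1) j * u (i - 1) j) / 2
          = aX (gmul u (DX h ρ)) i j ∧
      -α * ρ i j * advy i j = aY (gmul v (DY h ρ)) i j := by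
    intro i hi j hj
    simp only [mem_Icc] at hi hj
    have hmem : ∀ a b : ℤ, i - 1 ≤ a → a ≤ i + 1 → j - 1 ≤ b → b ≤ j + 1 →
        (ρ₂ - ρ₁) * c a b + ρ₁ ≠ 0 := by
      intro a b h1 h2 h3 h4
      exact hne a (by simp [mem_Icc]; omega) b (by simp [mem_Icc]; omega)
    have h00 := hmem i j (by omega) (by omega) (by omega) (by omega)
    have hp := hmem (i+1) j (by omega) (by omega) (by omega) (by omega)
    have hm := hmem (i-1) j (by omega) (by omega) (by omega) (by omega)
    have hup := hmem i (j+1) (by omega) (by omega) (by omega) (by omega)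
    have hdn := hmem i (j-1) (by omega) (by omega) (by omega) (by omega)
    have e1 : -α * ρ i j * advx i j
        = (DX h ρ i j * u i j + DX h ρ (i - 1) j * u (i - 1) j) / 2 := by
      rw [keyX i j h00 hp, keyX (i-1) j hm (by simpa using h00)]
      show -α * ρ i j * ((_ + _) / 2) = _
      simp only [sub_add_cancel]
      ring
    refine ⟨e1, by show _ = (_ + _)/2; show _ = (u i j * _ + u (i-1) j * _)/2; ring, ?_⟩
    simp only [aY, gmul]
    rw [keyY i j h00 hup, keyY i (j-1) hdn (by simpa using h00)]
    show -α * ρ i j * ((_ + _) / 2) = _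
    simp only [sub_add_cancel]
    ring
  refine ⟨main, ?_⟩
  unfold ip2
  refine Finset.sum_congr rfl fun i hi => Finset.sum_congr rfl fun j hj => ?_
  obtain ⟨e1, e2, e3⟩ := main i hi j hj
  show (advx i j + advy i j) * (-α * ρ i j) = _ * oneG i j
  have : -α * ρ i j * advx i j + -α * ρ i j * advy i j
      = aX (gmul u (DX h ρ)) i j + aY (gmul v (DY h ρ)) i j := by rw [e1, e2, e3]
  simp only [oneG, mul_one]
  linarith [this]
end
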